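/- arXiv:1712.01331 — 2 statements merged into one kernel-verified Lean document; each statement's English description precedes it below -/
import Mathlib

section
/- Let τ be the Sol Laplacian τ(f) = e^{-2t} f_{xx} + e^{2t} f_{yy} + f_{tt}. For f₁(x,y,t) = a₁ + a₂x + a₃y + a₄xy and f₂(x,y,t) = b₁ + b₂x + b₃y + b₄xy with a, b ∈ ℂ⁴, and F(x,y,t) = t²·f₁(x,y,t) + t³·f₂(x,y,t), one has τ(F) = 2f₁ + 6t·f₂ and τ²(F) = 0. In particular, if (a,b) ≠ 0 then F is proper biharmonic. -/
noncomputable section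

/-- Partial derivative in the first (x) coordinate. -/
def p1 (f : ℝ → ℝ → ℝ → ℂ) : ℝ → ℝ → ℝ → ℂ := fun (x y t : ℝ) => deriv (fun s => f s y t) x
/-- Partial derivative in the second (y) coordinate. -/
def p2 (f : ℝ → ℝ → ℝ → ℂ) : ℝ → ℝ → ℝ → ℂ := fun (x y t : ℝ) => deriv (fun s => f x s t) y
/-- Partial derivative in the third (t) coordinate. -/
def p3 (f : ℝ → ℝ → ℝ → ℂ) : ℝ → ℝ → ℝ → ℂ := fun (x y t : ℝ) => deriv (fun s => f x y s) t

/-- The Laplace-Beltrami operator of the Sol geometry: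
`τ(f) = e^{-2t} f_xx + e^{2t} f_yy + f_tt`. -/
def solTau (f : ℝ → ℝ → ℝ → ℂ) : ℝ → ℝ → ℝ → ℂ := fun (x y t : ℝ) =>
  (Real.exp (-2*t) : ℂ) * p1 (p1 f) x y t
    + (Real.exp (2*t) : ℂ) * p2 (p2 f) x y t + p3 (p3 f) x y t

/-! The function `F` and its Laplacian are affine in `x` and in `y` separately, with coefficients
cubic in `t`. On such functions the second `x`- and `y`-derivatives vanish, so `τ` acts as `∂²/∂t²`
on the coefficients: it sends `t² f₁ + t³ f₂` to `2 f₁ + 6 t f₂`, and that to `0`. Nonvanishing of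
`τ F` follows from the linear independence of the monomials `tᵏ xⁱ yʲ`. -/

def cubic (c₀ c₁ c₂ c₃ : ℂ) (t : ℝ) : ℂ := c₀ + c₁ * t + c₂ * t ^ 2 + c₃ * t ^ 3

theorem hasDerivAt_cubic (c₀ c₁ c₂ c₃ : ℂ) (t : ℝ) :
    HasDerivAt (cubic c₀ c₁ c₂ c₃) (cubic c₁ (2 * c₂) (3 * c₃) 0 t) t := by
  have h : HasDerivAt (fun z : ℂ => c₀ + c₁ * z + c₂ * z ^ 2 + c₃ * z ^ 3)
      (cubic c₁ (2 * c₂) (3 * c₃) 0 t) t :=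
    (((((hasDerivAt_id (t : ℂ)).const_mul c₁).const_add c₀).add
      ((hasDerivAt_pow 2 (t : ℂ)).const_mul c₂)).add
        ((hasDerivAt_pow 3 (t : ℂ)).const_mul c₃)).congr_deriv (by simp [cubic]; ring)
  exact h.comp_ofReal

theorem differentiable_cubic (c₀ c₁ c₂ c₃ : ℂ) : Differentiable ℝ (cubic c₀ c₁ c₂ c₃) :=
  fun t => (hasDerivAt_cubic c₀ c₁ c₂ c₃ t).differentiableAt

theorem deriv_cubic (c₀ c₁ c₂ c₃ : ℂ) :
    deriv (cubic c₀ c₁ c₂ c₃) = cubic c₁ (2 * c₂) (3 * c₃) 0 :=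
  funext fun t => (hasDerivAt_cubic c₀ c₁ c₂ c₃ t).deriv

@[simp]
theorem cubic_zero : cubic 0 0 0 0 = 0 := by
  funext t
  simp [cubic]

theorem cubic_eq_zero_iff {c₀ c₁ c₂ c₃ : ℂ} :
    cubic c₀ c₁ c₂ c₃ = 0 ↔ c₀ = 0 ∧ c₁ = 0 ∧ c₂ = 0 ∧ c₃ = 0 := by
  refine ⟨fun h => ?_, fun ⟨h₀, h₁, h₂, h₃⟩ => by funext t; simp [cubic, h₀, h₁, h₂, h₃]⟩
  have e : ∀ t : ℝ, c₀ + c₁ * t + c₂ * t ^ 2 + c₃ * t ^ 3 = 0 := fun t => congrFun h t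
  have e₀ := e 0
  have e₁ := e 1
  have e₂ := e (-1)
  have e₃ := e 2
  push_cast at e₀ e₁ e₂ e₃
  refine ⟨by linear_combination e₀, ?_, ?_, ?_⟩
  · linear_combination (e₁ - e₂) / 2 - (e₃ - 3 * e₁ - e₂ + 3 * e₀) / 6
  · linear_combination (e₁ + e₂) / 2 - e₀
  · linear_combination (e₃ - 3 * e₁ - e₂ + 3 * e₀) / 6

def biaffine (α β γ δ : ℝ → ℂ) : ℝ → ℝ → ℝ → ℂ :=
  fun x y t => α t + β t * x + γ t * y + δ t * x * y

@[simp]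
theorem biaffine_zero : biaffine 0 0 0 0 = fun _ _ _ => 0 := by
  funext x y t
  simp [biaffine]

theorem biaffine_eq_zero_iff {α β γ δ : ℝ → ℂ} :
    biaffine α β γ δ = (fun _ _ _ => 0) ↔ α = 0 ∧ β = 0 ∧ γ = 0 ∧ δ = 0 := by
  refine ⟨fun h => ?_, fun ⟨hα, hβ, hγ, hδ⟩ => by rw [hα, hβ, hγ, hδ, biaffine_zero]⟩
  have coeff_eq_zero (t : ℝ) : α t = 0 ∧ β t = 0 ∧ γ t = 0 ∧ δ t = 0 := by
    have e (x y : ℝ) : α t + β t * x + γ t * y + δ t * x * y = 0 :=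
      congrFun (congrFun (congrFun h x) y) t
    have e₀₀ := e 0 0
    have e₁₀ := e 1 0
    have e₀₁ := e 0 1
    have e₁₁ := e 1 1
    push_cast at e₀₀ e₁₀ e₀₁ e₁₁
    refine ⟨by linear_combination e₀₀, by linear_combination e₁₀ - e₀₀,
      by linear_combination e₀₁ - e₀₀, by linear_combination e₁₁ - e₁₀ - e₀₁ + e₀₀⟩
  exact ⟨funext fun t => (coeff_eq_zero t).1, funext fun t => (coeff_eq_zero t).2.1,
    funext fun t => (coeff_eq_zero t).2.2.1, funext fun t => (coeff_eq_zero t).2.2.2⟩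

theorem hasDerivAt_const_add_mul_ofReal (c d : ℂ) (s : ℝ) :
    HasDerivAt (fun s : ℝ => c + d * s) d s := by
  simpa using ((hasDerivAt_id s).ofReal_comp.const_mul d).const_add c

theorem p1_biaffine (α β γ δ : ℝ → ℂ) : p1 (biaffine α β γ δ) = biaffine β 0 δ 0 := by
  funext x y t
  have h : (fun s : ℝ => α t + β t * s + γ t * y + δ t * s * y)
      = fun s : ℝ => (α t + γ t * y) + (β t + δ t * y) * s := funext fun s => by ring
  simp only [p1, biaffine, h, (hasDerivAt_const_add_mul_ofReal _ _ x).deriv, Pi.zero_apply]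
  ring

theorem p2_biaffine (α β γ δ : ℝ → ℂ) : p2 (biaffine α β γ δ) = biaffine γ δ 0 0 := by
  funext x y t
  have h : (fun s : ℝ => α t + β t * x + γ t * s + δ t * x * s)
      = fun s : ℝ => (α t + β t * x) + (γ t + δ t * x) * s := funext fun s => by ring
  simp only [p2, biaffine, h, (hasDerivAt_const_add_mul_ofReal _ _ y).deriv, Pi.zero_apply]
  ring

theorem p3_biaffine {α β γ δ : ℝ → ℂ} (hα : Differentiable ℝ α) (hβ : Differentiable ℝ β)
    (hγ : Differentiable ℝ γ) (hδ : Differentiable ℝ δ) :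
    p3 (biaffine α β γ δ) = biaffine (deriv α) (deriv β) (deriv γ) (deriv δ) := by
  funext x y t
  exact ((((hα t).hasDerivAt.add ((hβ t).hasDerivAt.mul_const (x : ℂ))).add
    ((hγ t).hasDerivAt.mul_const (y : ℂ))).add
    (((hδ t).hasDerivAt.mul_const (x : ℂ)).mul_const (y : ℂ))).deriv

theorem solTau_biaffine (α β γ δ : ℝ → ℂ) :
    solTau (biaffine α β γ δ) = p3 (p3 (biaffine α β γ δ)) := by
  funext x y t
  simp [solTau, p1_biaffine, p2_biaffine]

theorem solTau_biaffine_cubic (a₀ a₁ a₂ a₃ b₀ b₁ b₂ b₃ c₀ c₁ c₂ c₃ d₀ d₁ d₂ d₃ : ℂ) :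
    solTau (biaffine (cubic a₀ a₁ a₂ a₃) (cubic b₀ b₁ b₂ b₃) (cubic c₀ c₁ c₂ c₃)
      (cubic d₀ d₁ d₂ d₃)) =
    biaffine (cubic (2 * a₂) (6 * a₃) 0 0) (cubic (2 * b₂) (6 * b₃) 0 0)
      (cubic (2 * c₂) (6 * c₃) 0 0) (cubic (2 * d₂) (6 * d₃) 0 0) := by
  simp only [solTau_biaffine, p3_biaffine, differentiable_cubic, deriv_cubic]
  ring_nf

theorem sol_proper_biharmonic_family (a₁ a₂ a₃ a₄ b₁ b₂ b₃ b₄ : ℂ)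
    (f₁ : ℝ → ℝ → ℝ → ℂ) (f₂ : ℝ → ℝ → ℝ → ℂ) (F : ℝ → ℝ → ℝ → ℂ)
    (hf₁ : f₁ = fun (x y t : ℝ) => a₁ + a₂ * (x : ℂ) + a₃ * (y : ℂ) + a₄ * (x : ℂ) * (y : ℂ))
    (hf₂ : f₂ = fun (x y t : ℝ) => b₁ + b₂ * (x : ℂ) + b₃ * (y : ℂ) + b₄ * (x : ℂ) * (y : ℂ))
    (hF : F = fun (x y t : ℝ) => (t : ℂ) ^ 2 * f₁ x y t + (t : ℂ) ^ 3 * f₂ x y t) :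
    solTau F = (fun x y t => 2 * f₁ x y t + 6 * (t : ℂ) * f₂ x y t)
      ∧ solTau (solTau F) = (fun _ _ _ => (0 : ℂ))
      ∧ ((a₁, a₂, a₃, a₄, b₁, b₂, b₃, b₄) ≠ (0, 0, 0, 0, 0, 0, 0, 0) →
          solTau F ≠ fun _ _ _ => (0 : ℂ)) := by
  have hF_biaffine : F = biaffine (cubic 0 0 a₁ b₁) (cubic 0 0 a₂ b₂) (cubic 0 0 a₃ b₃)
      (cubic 0 0 a₄ b₄) := by
    subst hf₁ hf₂ hF
    funext x y t
    simp only [biaffine, cubic]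
    ring
  have hτF : solTau F = biaffine (cubic (2 * a₁) (6 * b₁) 0 0) (cubic (2 * a₂) (6 * b₂) 0 0)
      (cubic (2 * a₃) (6 * b₃) 0 0) (cubic (2 * a₄) (6 * b₄) 0 0) := by
    rw [hF_biaffine, solTau_biaffine_cubic]
  refine ⟨?_, ?_, fun hne hzero => hne ?_⟩
  · subst hf₁ hf₂
    rw [hτF]
    funext x y t
    simp only [biaffine, cubic]
    ring
  · rw [hτF, solTau_biaffine_cubic]
    simp
  · obtain ⟨h₁, h₂, h₃, h₄⟩ := biaffine_eq_zero_iff.mp (hτF ▸ hzero)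
    simp only [cubic_eq_zero_iff, mul_eq_zero, OfNat.ofNat_ne_zero, false_or] at h₁ h₂ h₃ h₄
    simp [h₁, h₂, h₃, h₄]
end
end

section
/- On the punctured sphere P modelled as ℂ with the metric ds² = 4(dx²+dy²)/(1+x²+y²)² of constant curvature +1, whose Laplace–Beltrami operator is τ(f) = 4(1+z z̄)² ∂²f/∂z∂z̄ (up to the conformal factor, τ(f) = ((1+|z|²)²/4)(f_{xx}+f_{yy})·4), the function F(z) = log(1 + |z|²) satisfies τ(F) = 4 and τ²(F) = 0; i.e., F is proper biharmonic on P. -/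
noncomputable section

/-- Second partial derivative in the real direction, for functions on `ℂ`. -/
def dxx (f : ℂ → ℂ) (z : ℂ) : ℂ := fderiv ℝ (fun w => fderiv ℝ f w 1) z 1
/-- Second partial derivative in the imaginary direction, for functions on `ℂ`. -/
def dyy (f : ℂ → ℂ) (z : ℂ) : ℂ :=
  fderiv ℝ (fun w => fderiv ℝ f w Complex.I) z Complex.I

/-- The Laplace-Beltrami operator of the punctured sphere, modelled as `ℂ` with the
metric `4(dx²+dy²)/(1+x²+y²)²`:
`τ(f)(z) = (1 + |z|²)² (f_xx + f_yy)(z) = 4 (1 + z z̄)² ∂²f/∂z∂z̄`. -/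
def sphTau (f : ℂ → ℂ) (z : ℂ) : ℂ :=
  (((1 + ‖z‖ ^ 2) ^ 2 : ℝ) : ℂ) * (dxx f z + dyy f z)

/-! Write `F(z) = g(|z|²)` with `g(s) = log (1 + s)`. For such a radial function the flat Laplacian
is `4 (g'(s) + s g''(s)) = 4 / (1 + s)²`, so the conformal factor `(1 + s)²` makes `τ(F)` the
constant `4`, and constants are annihilated by `τ`. -/

open scoped RealInnerProductSpace

section RadialDerivatives

variable {E F : Type*} [NormedAddCommGroup E] [InnerProductSpace ℝ E]
  [NormedAddCommGroup F] [NormedSpace ℝ F]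

theorem HasDerivAt.comp_norm_sq {g : ℝ → F} {d : F} {x : E} (hg : HasDerivAt g d (‖x‖ ^ 2)) :
    HasFDerivAt (fun y => g (‖y‖ ^ 2)) ((2 • innerSL ℝ x).smulRight d) x :=
  (hg.hasFDerivAt.comp x (hasStrictFDerivAt_norm_sq x).hasFDerivAt).congr_fderiv <| by
    ext; simp [two_smul, add_smul]

theorem fderiv_comp_norm_sq_apply {g : ℝ → F} {d : F} {x : E} (hg : HasDerivAt g d (‖x‖ ^ 2))
    (v : E) : fderiv ℝ (fun y => g (‖y‖ ^ 2)) x v = (2 * ⟪x, v⟫) • d := by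
  simp [hg.comp_norm_sq.fderiv]

theorem fderiv_fderiv_comp_norm_sq_apply {g g' : ℝ → F} {d : F} {x : E}
    (hg : ∀ s, 0 ≤ s → HasDerivAt g (g' s) s) (hg' : HasDerivAt g' d (‖x‖ ^ 2)) (v : E) :
    fderiv ℝ (fun y => fderiv ℝ (fun y => g (‖y‖ ^ 2)) y v) x v =
      (4 * ⟪x, v⟫ ^ 2) • d + (2 * ‖v‖ ^ 2) • g' (‖x‖ ^ 2) := by
  have hfirst : (fun y => fderiv ℝ (fun y => g (‖y‖ ^ 2)) y v) =
      fun y => (2 * ⟪v, y⟫) • g' (‖y‖ ^ 2) := by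
    funext y
    rw [fderiv_comp_norm_sq_apply (hg _ (by positivity)), real_inner_comm]
  have hinner : HasFDerivAt (fun y => 2 * ⟪v, y⟫) (2 • innerSL ℝ v) x :=
    ((innerSL ℝ v).hasFDerivAt.const_mul 2).congr_fderiv (by ext; simp)
  have hprod : HasFDerivAt (fun y => (2 * ⟪v, y⟫) • g' (‖y‖ ^ 2)) _ x :=
    hinner.smul hg'.comp_norm_sq
  rw [hfirst, hprod.fderiv]
  simp only [add_apply, smul_apply, ContinuousLinearMap.smulRight_apply, coe_innerSL_apply,
    real_inner_self_eq_norm_sq, real_inner_comm v x]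
  module

end RadialDerivatives

theorem dxx_add_dyy_comp_norm_sq {g g' : ℝ → ℂ} {d z : ℂ}
    (hg : ∀ s, 0 ≤ s → HasDerivAt g (g' s) s) (hg' : HasDerivAt g' d (‖z‖ ^ 2)) :
    dxx (fun w => g (‖w‖ ^ 2)) z + dyy (fun w => g (‖w‖ ^ 2)) z =
      4 * (g' (‖z‖ ^ 2) + (‖z‖ ^ 2 : ℝ) * d) := by
  have hnorm : ‖z‖ ^ 2 = z.re ^ 2 + z.im ^ 2 := by
    rw [Complex.sq_norm, Complex.normSq_apply]; ring
  have hre : ⟪z, 1⟫ = z.re := by simp [Complex.inner]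
  have him : ⟪z, Complex.I⟫ = z.im := by simp [Complex.inner]
  rw [dxx, dyy, fderiv_fderiv_comp_norm_sq_apply hg hg', fderiv_fderiv_comp_norm_sq_apply hg hg',
    hre, him, norm_one, Complex.norm_I]
  push_cast [Complex.real_smul, hnorm]
  ring

theorem sphTau_const (c : ℂ) : sphTau (fun _ => c) = 0 := by
  ext z
  simp [sphTau, dxx, dyy]

theorem sphere_log_proper_biharmonic :
    sphTau (fun w => (↑(Real.log (1 + ‖w‖ ^ 2)) : ℂ)) = (fun _ => (4 : ℂ)) ∧
    sphTau (sphTau (fun w => (↑(Real.log (1 + ‖w‖ ^ 2)) : ℂ))) = fun _ => (0 : ℂ) := by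
  have hlog : ∀ s : ℝ, 0 ≤ s →
      HasDerivAt (fun t => (Real.log (1 + t) : ℂ)) ((1 + s)⁻¹ : ℝ) s :=
    fun s hs => by
      simpa using (((hasDerivAt_id s).const_add 1).log (by positivity)).ofReal_comp
  have hinv : ∀ s : ℝ, 0 ≤ s →
      HasDerivAt (fun t => ((1 + t)⁻¹ : ℝ) : ℝ → ℂ) (-1 / (1 + s) ^ 2 : ℝ) s :=
    fun s hs => by
      simpa using (((hasDerivAt_id s).const_add 1).inv (by positivity)).ofReal_comp
  have hτ : sphTau (fun w => (↑(Real.log (1 + ‖w‖ ^ 2)) : ℂ)) = fun _ => 4 := by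
    ext z
    have hpos : (1 + ‖z‖ ^ 2 : ℂ) ≠ 0 := by
      exact_mod_cast (by positivity : (1 + ‖z‖ ^ 2 : ℝ) ≠ 0)
    rw [sphTau, dxx_add_dyy_comp_norm_sq hlog (hinv _ (by positivity))]
    push_cast
    field_simp
    ring
  exact ⟨hτ, by rw [hτ, sphTau_const]; rfl⟩
end
end
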